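/- arXiv:2206.14408 — 3 statements merged into one kernel-verified Lean document; each statement's English description precedes it below -/
import Mathlib

section
/- For any real α > 0 and positive integer n, the sum ∑_{i=1}^n 2^(α√i) is O(√n · 2^(α√n)); more precisely, ∑_{i=1}^n 2^(α√i) ≤ (2^α/(2^α - 1)) · (2⌈√n⌉ + 1) · 2^(α⌈√n⌉). -/
/-!
Cut `1, …, n` into the blocks `((j - 1)², j²]` for `j = 1, …, m` with `m = ⌈√n⌉`. The `j`-th
block has `2j - 1 ≤ 2m + 1` elements, each term of which is at most `r ^ j` with `r = 2 ^ α > 1`;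
the geometric sum `r + ⋯ + r ^ m` is at most `r ^ (m + 1) / (r - 1)`.
-/

open Real Finset

lemma geom_sum_Icc_one_le {r : ℝ} (hr : 1 < r) (m : ℕ) :
    ∑ j ∈ Icc 1 m, r ^ j ≤ r ^ (m + 1) / (r - 1) := by
  have hr0 : 0 < r - 1 := sub_pos.2 hr
  calc ∑ j ∈ Icc 1 m, r ^ j ≤ ∑ j ∈ range (m + 1), r ^ j :=
        sum_le_sum_of_subset_of_nonneg
          (fun j hj => by simp only [mem_Icc, mem_range] at hj ⊢; omega)
          (fun j _ _ => by positivity)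
    _ = (r ^ (m + 1) - 1) / (r - 1) := geom_sum_eq hr.ne' _
    _ ≤ r ^ (m + 1) / (r - 1) := by gcongr; linarith

lemma sum_Ioc_sq_le {f : ℝ → ℝ} (hf : Monotone f) (m : ℕ) :
    ∑ i ∈ Ioc (m ^ 2) ((m + 1) ^ 2), f √i ≤
      (2 * ((m + 1 : ℕ) : ℝ) - 1) * f (m + 1 : ℕ) := by
  have hbound : ∀ i ∈ Ioc (m ^ 2) ((m + 1) ^ 2), f √i ≤ f (m + 1 : ℕ) := by
    intro i hi
    refine hf ((sqrt_le_left (Nat.cast_nonneg _)).2 ?_)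
    exact_mod_cast (mem_Ioc.1 hi).2
  have hcard : ((#(Ioc (m ^ 2) ((m + 1) ^ 2)) : ℕ) : ℝ) = 2 * ((m + 1 : ℕ) : ℝ) - 1 := by
    rw [Nat.card_Ioc, Nat.cast_sub (Nat.pow_le_pow_left m.le_succ 2)]
    push_cast
    ring
  simpa only [nsmul_eq_mul, hcard] using sum_le_card_nsmul _ _ _ hbound

lemma sum_Icc_sq_le {f : ℝ → ℝ} (hf : Monotone f) (m : ℕ) :
    ∑ i ∈ Icc 1 (m ^ 2), f √i ≤ ∑ j ∈ Icc 1 m, (2 * (j : ℝ) - 1) * f j := by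
  induction m with
  | zero => simp
  | succ m ih =>
    have hsq : m ^ 2 ≤ (m + 1) ^ 2 := Nat.pow_le_pow_left m.le_succ 2
    have hsplit : Icc 1 ((m + 1) ^ 2) = Icc 1 (m ^ 2) ∪ Ioc (m ^ 2) ((m + 1) ^ 2) := by
      ext i; simp only [mem_union, mem_Icc, mem_Ioc]; constructor <;> intro h <;> omega
    have hdisj : Disjoint (Icc 1 (m ^ 2)) (Ioc (m ^ 2) ((m + 1) ^ 2)) :=
      disjoint_left.2 fun i h₁ h₂ => by simp only [mem_Icc, mem_Ioc] at h₁ h₂; omega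
    rw [hsplit, sum_union hdisj, sum_Icc_succ_top (by omega)]
    exact add_le_add ih (sum_Ioc_sq_le hf m)

lemma le_ceil_sqrt_sq (n : ℕ) : n ≤ ⌈√(n : ℝ)⌉₊ ^ 2 := by
  have h := (sqrt_le_left (Nat.cast_nonneg (α := ℝ) ⌈√(n : ℝ)⌉₊)).1 (Nat.le_ceil _)
  exact_mod_cast h

lemma two_rpow_mul_natCast (α : ℝ) (j : ℕ) : (2 : ℝ) ^ (α * j) = (2 ^ α) ^ j :=
  rpow_mul_natCast zero_le_two α j

theorem sum_rpow_sqrt_bound_general (α : ℝ) (hα : 0 < α) (n : ℕ) :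
    ∑ i ∈ Finset.Icc 1 n, (2 : ℝ) ^ (α * Real.sqrt i) ≤
      (2 ^ α / (2 ^ α - 1)) * (2 * (⌈Real.sqrt n⌉₊ : ℝ) + 1) *
        (2 : ℝ) ^ (α * (⌈Real.sqrt n⌉₊ : ℝ)) := by
  set m := ⌈√(n : ℝ)⌉₊
  have hr : 1 < (2 : ℝ) ^ α := one_lt_rpow one_lt_two hα
  have hf : Monotone fun x : ℝ => (2 : ℝ) ^ (α * x) := fun x y hxy =>
    rpow_le_rpow_of_exponent_le one_le_two (mul_le_mul_of_nonneg_left hxy hα.le)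
  calc ∑ i ∈ Icc 1 n, (2 : ℝ) ^ (α * √i)
      ≤ ∑ i ∈ Icc 1 (m ^ 2), (2 : ℝ) ^ (α * √i) :=
        sum_le_sum_of_subset_of_nonneg (Icc_subset_Icc_right (le_ceil_sqrt_sq n))
          (fun i _ _ => by positivity)
    _ ≤ ∑ j ∈ Icc 1 m, (2 * (j : ℝ) - 1) * (2 ^ α) ^ j := by
        simpa only [two_rpow_mul_natCast] using sum_Icc_sq_le hf m
    _ ≤ (2 * (m : ℝ) + 1) * ∑ j ∈ Icc 1 m, (2 ^ α) ^ j := by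
        rw [mul_sum]
        refine sum_le_sum fun j hj => ?_
        have hjm : (j : ℝ) ≤ m := by exact_mod_cast (mem_Icc.1 hj).2
        gcongr
        linarith
    _ ≤ (2 * (m : ℝ) + 1) * ((2 ^ α) ^ (m + 1) / (2 ^ α - 1)) := by
        gcongr
        exact geom_sum_Icc_one_le hr m
    _ = _ := by
        rw [two_rpow_mul_natCast, pow_succ]
        field_simp

theorem sum_rpow_sqrt_bound (α : ℝ) (hα : 0 < α) (n : ℕ) (hn : 1 ≤ n) :
    ∑ i ∈ Finset.Icc 1 n, (2 : ℝ) ^ (α * Real.sqrt i) ≤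
      (2 ^ α / (2 ^ α - 1)) * (2 * (⌈Real.sqrt n⌉₊ : ℝ) + 1) *
        (2 : ℝ) ^ (α * (⌈Real.sqrt n⌉₊ : ℝ)) :=
  sum_rpow_sqrt_bound_general α hα n
end

section
/- Let N ≥ 1, m ≥ 1 be integers, M = 2^m, s ∈ ℤ/N. For k = (k_1,…,k_m) ∈ (ℤ/N)^m and j ∈ ℤ/N, |∑_{b ∈ {0,1}^m} ω_N^{(s-j)⟨b,k⟩}|² = M² · ∏_{i=1}^m cos²(π k_i (s-j)/N), where ω_N = exp(2πi/N). -/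
/-!
The phase is additive in `b`, so the sum over `b ∈ {0,1}^m` factors as `∏ i, (1 + e^{iθᵢ})`
with `θᵢ = 2π kᵢ (s - j) / N`, and `|1 + e^{iθ}| = 2 |cos (θ / 2)|`.
-/

open Finset Complex

lemma sum_pi_bool_exp_sum_ite {ι : Type*} [Fintype ι] [DecidableEq ι] (z : ι → ℂ) :
    ∑ b : ι → Bool, exp (∑ i, if b i then z i else 0) = ∏ i, (1 + exp (z i)) := by
  have hfactor (i : ι) : 1 + exp (z i) = ∑ t : Bool, if t then exp (z i) else 1 := by
    simp [add_comm]
  simp_rw [hfactor, Fintype.prod_sum, exp_sum, apply_ite exp, exp_zero]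

lemma norm_one_add_exp_mul_I_sq (θ : ℝ) :
    ‖1 + exp (θ * I)‖ ^ 2 = 4 * Real.cos (θ / 2) ^ 2 := by
  rw [← normSq_eq_norm_sq, exp_mul_I, ← ofReal_cos, ← ofReal_sin, normSq_apply,
    Real.cos_sq, mul_div_cancel₀ θ two_ne_zero]
  simp only [add_re, add_im, one_re, one_im, ofReal_re, ofReal_im, mul_re, mul_im, I_re, I_im]
  linear_combination Real.sin_sq_add_cos_sq θ

lemma norm_prod_one_add_exp_mul_I_sq {ι : Type*} [Fintype ι] (θ : ι → ℝ) :
    ‖∏ i, (1 + exp (θ i * I))‖ ^ 2 =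
      (2 ^ Fintype.card ι : ℝ) ^ 2 * ∏ i, Real.cos (θ i / 2) ^ 2 := by
  rw [norm_prod, ← prod_pow, prod_congr rfl fun i _ => norm_one_add_exp_mul_I_sq (θ i),
    prod_mul_distrib, prod_const, card_univ, ← pow_mul, mul_comm _ 2, pow_mul]
  norm_num

theorem abs_sq_sum_phase_eq_prod_cos_general
    (N m : ℕ)
    (k : Fin m → ZMod N) (s j : ZMod N) :
    (‖∑ b : Fin m → Bool,
        Complex.exp (2 * Real.pi * Complex.I *
          (((s - j).val : ℂ) * ∑ i, if b i then ((k i).val : ℂ) else 0) / N)‖) ^ 2 =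
      ((2 ^ m : ℝ)) ^ 2 *
        ∏ i, (Real.cos (Real.pi * ((k i).val : ℝ) * (((s - j).val : ℝ)) / N)) ^ 2 := by
  set θ : Fin m → ℝ := fun i => 2 * Real.pi * (k i).val * (s - j).val / N
  have hphase (b : Fin m → Bool) :
      2 * Real.pi * I * (((s - j).val : ℂ) * ∑ i, if b i then ((k i).val : ℂ) else 0) / N
        = ∑ i, if b i then (θ i : ℂ) * I else 0 := by
    simp only [mul_sum, sum_div]
    refine sum_congr rfl fun i _ => ?_
    split_ifs <;> push_cast [θ] <;> ring
  simp_rw [hphase, sum_pi_bool_exp_sum_ite, norm_prod_one_add_exp_mul_I_sq, Fintype.card_fin]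
  congr! 4 with i
  simp only [θ]
  ring

theorem abs_sq_sum_phase_eq_prod_cos
    (N m : ℕ) (hN : 1 ≤ N) (hm : 1 ≤ m) [NeZero N]
    (k : Fin m → ZMod N) (s j : ZMod N) :
    (‖∑ b : Fin m → Bool,
        Complex.exp (2 * Real.pi * Complex.I *
          (((s - j).val : ℂ) * ∑ i, if b i then ((k i).val : ℂ) else 0) / N)‖) ^ 2 =
      ((2 ^ m : ℝ)) ^ 2 *
        ∏ i, (Real.cos (Real.pi * ((k i).val : ℝ) * (((s - j).val : ℝ)) / N)) ^ 2 :=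
  abs_sq_sum_phase_eq_prod_cos_general N m k s j
end

section
/- Let N ≥ 2, m ≥ 1, M = 2^m, and let k = (k_1,…,k_m) be uniform i.i.d. on ℤ/N. Define Z(k) = (M²/N) · ∑_{j ∈ ℤ/N} ∏_{i=1}^m cos²(π k_i (s-j)/N) for a fixed s ∈ ℤ/N. Then E_k[Z(k)] = M(1 + (M-1)/N) = (M/N)(N + M - 1). -/
/-!
Summing over `k` first, the product over `i` factorises, so for `d = s - j` the inner sum is
`(∑ a, cos² (π a d / N)) ^ m`. Writing `cos² x = (1 + cos 2x) / 2`, the sum of `cos (2π a d / N)`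
over `a` is the real part of a character sum of the primitive character `ZMod.stdAddChar`, which
is `N` for `d = 0` and `0` otherwise. Hence the inner sum is `N ^ m` for `j = s` and `(N / 2) ^ m`
for the other `N - 1` values of `j`.
-/

open Finset Real

namespace ZMod
variable {N : ℕ} [NeZero N]

lemma cos_two_pi_val_mul_val_div_eq_re_stdAddChar (a d : ZMod N) :
    cos (2 * π * a.val * d.val / N) = (stdAddChar (a * d)).re := by
  have hval : a * d = ((a.val * d.val : ℕ) : ZMod N) := by simp
  rw [hval, stdAddChar_apply, toCircle_natCast, ← Complex.exp_ofReal_mul_I_re]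
  congr 2
  push_cast
  ring

lemma sum_cos_two_pi_val_mul_val_div (d : ZMod N) :
    ∑ a : ZMod N, cos (2 * π * a.val * d.val / N) = if d = 0 then (N : ℝ) else 0 := by
  simp_rw [cos_two_pi_val_mul_val_div_eq_re_stdAddChar, ← Complex.re_sum,
    AddChar.sum_mulShift d (isPrimitive_stdAddChar N), ZMod.card]
  split_ifs <;> simp

lemma sum_cos_sq_pi_val_mul_val_div (d : ZMod N) :
    ∑ a : ZMod N, cos (π * a.val * d.val / N) ^ 2 = if d = 0 then (N : ℝ) else N / 2 := by
  have hcos_sq (a : ZMod N) : cos (π * a.val * d.val / N) ^ 2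
      = 1 / 2 + cos (2 * π * a.val * d.val / N) / 2 := by
    rw [cos_sq]; ring_nf
  simp_rw [hcos_sq, sum_add_distrib, ← sum_div, sum_cos_two_pi_val_mul_val_div, sum_const,
    card_univ, ZMod.card, nsmul_eq_mul]
  split_ifs <;> ring

lemma sum_ite_eq_zero_const {M : Type*} [AddCommMonoid M] (A B : M) :
    ∑ d : ZMod N, (if d = 0 then A else B) = A + (N - 1) • B := by
  rw [Fintype.sum_eq_add_sum_compl 0, if_pos rfl,
    sum_congr rfl fun d hd => if_neg (mem_compl.mp hd ∘ mem_singleton.mpr), sum_const,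
    card_compl, card_singleton, ZMod.card]

lemma sum_pi_prod_cos_sq (m : ℕ) (d : ZMod N) :
    ∑ k : Fin m → ZMod N, ∏ i, cos (π * (k i).val * d.val / N) ^ 2
      = if d = 0 then (N : ℝ) ^ m else (N / 2 : ℝ) ^ m := by
  rw [← ite_pow, ← sum_cos_sq_pi_val_mul_val_div, Fintype.sum_pow]

lemma sum_sum_pi_prod_cos_sq (m : ℕ) :
    ∑ d : ZMod N, ∑ k : Fin m → ZMod N, ∏ i, cos (π * (k i).val * d.val / N) ^ 2
      = (N : ℝ) ^ m + (N - 1) * (N / 2 : ℝ) ^ m := by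
  simp_rw [sum_pi_prod_cos_sq, sum_ite_eq_zero_const, nsmul_eq_mul,
    Nat.cast_sub (NeZero.one_le : 1 ≤ N), Nat.cast_one]

end ZMod

theorem expectation_Z_general (N m : ℕ) [NeZero N] (s : ZMod N) :
    (1 / (N : ℝ) ^ m) * ∑ k : Fin m → ZMod N,
        (((2 ^ m : ℝ)) ^ 2 / N) * ∑ j : ZMod N,
          ∏ i, (Real.cos (Real.pi * ((k i).val : ℝ) * (((s - j).val : ℝ)) / N)) ^ 2 =
      ((2 ^ m : ℝ) / N) * (N + 2 ^ m - 1) := by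
  have hN : (N : ℝ) ≠ 0 := NeZero.ne _
  have hreindex :
      ∑ j : ZMod N, ∑ k : Fin m → ZMod N, ∏ i, cos (π * (k i).val * (s - j).val / N) ^ 2
        = ∑ d : ZMod N, ∑ k : Fin m → ZMod N, ∏ i, cos (π * (k i).val * d.val / N) ^ 2 :=
    Fintype.sum_equiv (Equiv.subLeft s) _ _ fun _ => rfl
  rw [← mul_sum, sum_comm, hreindex, ZMod.sum_sum_pi_prod_cos_sq, div_pow]
  field_simp
  ring

theorem expectation_Z (N m : ℕ) (hN : 2 ≤ N) (hm : 1 ≤ m) [NeZero N] (s : ZMod N) :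
    (1 / (N : ℝ) ^ m) * ∑ k : Fin m → ZMod N,
        (((2 ^ m : ℝ)) ^ 2 / N) * ∑ j : ZMod N,
          ∏ i, (Real.cos (Real.pi * ((k i).val : ℝ) * (((s - j).val : ℝ)) / N)) ^ 2 =
      ((2 ^ m : ℝ) / N) * (N + 2 ^ m - 1) :=
  expectation_Z_general N m s
end
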